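/- arXiv:2011.06374 — 2 statements merged into one kernel-verified Lean document; each statement's English description precedes it below -/
import Mathlib

section
/- Under the DCSBM population setup, the regularized population Laplacian 𝓛_δ has rank exactly K. -/
open Matrix BigOperators MeasureTheory ProbabilityTheory

noncomputable section

namespace DCSBM

variable {n K : ℕ}

/-- The `n × K` membership matrix `Z` with `Z i k = 1` iff node `i` is in community `k`. -/
def Zmat (g : Fin n → Fin K) : Matrix (Fin n) (Fin K) ℝ :=
  Matrix.of fun i k => if g i = k then (1 : ℝ) else 0

/-- The population expectation matrix `Ω = Θ Z P Zᵀ Θ`. -/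
def Omega (g : Fin n → Fin K) (θ : Fin n → ℝ) (P : Matrix (Fin K) (Fin K) ℝ) :
    Matrix (Fin n) (Fin n) ℝ :=
  Matrix.diagonal θ * Zmat g * P * (Zmat g)ᵀ * Matrix.diagonal θ

/-- Expected degrees `𝒟_ii = ∑_j Ω_ij`. -/
def Dvec (g : Fin n → Fin K) (θ : Fin n → ℝ) (P : Matrix (Fin K) (Fin K) ℝ) : Fin n → ℝ :=
  fun i => ∑ j, Omega g θ P i j

/-- The regularized population Laplacian `𝓛_δ = 𝒟_δ^{-1/2} Ω 𝒟_δ^{-1/2}`. -/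
def Ldelta (g : Fin n → Fin K) (θ : Fin n → ℝ) (P : Matrix (Fin K) (Fin K) ℝ) (δ d : ℝ) :
    Matrix (Fin n) (Fin n) ℝ :=
  Matrix.diagonal (fun i => (Real.sqrt (Dvec g θ P i + δ * d))⁻¹) * Omega g θ P *
    Matrix.diagonal (fun i => (Real.sqrt (Dvec g θ P i + δ * d))⁻¹)

/-- `θ^δ_i = θ_i 𝒟_ii / (𝒟_ii + δ d)`. -/
def thetaDelta (g : Fin n → Fin K) (θ : Fin n → ℝ) (P : Matrix (Fin K) (Fin K) ℝ) (δ d : ℝ) :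
    Fin n → ℝ :=
  fun i => θ i * Dvec g θ P i / (Dvec g θ P i + δ * d)

/-- `θ̃_i = √(θ^δ_i)`. -/
def thetaTilde (g : Fin n → Fin K) (θ : Fin n → ℝ) (P : Matrix (Fin K) (Fin K) ℝ) (δ d : ℝ) :
    Fin n → ℝ :=
  fun i => Real.sqrt (thetaDelta g θ P δ d i)

/-- `θ̃^{(k)}_i = θ̃_i · 1{g i = k}`. -/
def thetaTildeK (g : Fin n → Fin K) (θ : Fin n → ℝ) (P : Matrix (Fin K) (Fin K) ℝ) (δ d : ℝ)
    (k : Fin K) : Fin n → ℝ :=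
  fun i => if g i = k then thetaTilde g θ P δ d i else 0

/-- Euclidean norm of a vector. -/
def normE {m : ℕ} (v : Fin m → ℝ) : ℝ := Real.sqrt (∑ i, v i ^ 2)

/-- Row sums of `Q = P Zᵀ Θ`, the diagonal entries of `D_P`. -/
def DPvec (g : Fin n → Fin K) (θ : Fin n → ℝ) (P : Matrix (Fin K) (Fin K) ℝ) : Fin K → ℝ :=
  fun k => ∑ j, (P * (Zmat g)ᵀ * Matrix.diagonal θ) k j

/-- `P̃ = D_P^{-1/2} P D_P^{-1/2}`. -/
def Ptilde (g : Fin n → Fin K) (θ : Fin n → ℝ) (P : Matrix (Fin K) (Fin K) ℝ) :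
    Matrix (Fin K) (Fin K) ℝ :=
  Matrix.diagonal (fun k => (Real.sqrt (DPvec g θ P k))⁻¹) * P *
    Matrix.diagonal (fun k => (Real.sqrt (DPvec g θ P k))⁻¹)

/-- `D̃ = diag(‖θ̃^{(k)}‖ / ‖θ̃‖)`. -/
def Dtilde (g : Fin n → Fin K) (θ : Fin n → ℝ) (P : Matrix (Fin K) (Fin K) ℝ) (δ d : ℝ) :
    Matrix (Fin K) (Fin K) ℝ :=
  Matrix.diagonal fun k => normE (thetaTildeK g θ P δ d k) / normE (thetaTilde g θ P δ d)

/-- `Γ̃`, the `n × K` matrix whose `k`-th column is `θ̃^{(k)} / ‖θ̃^{(k)}‖`. -/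
def Gamma (g : Fin n → Fin K) (θ : Fin n → ℝ) (P : Matrix (Fin K) (Fin K) ℝ) (δ d : ℝ) :
    Matrix (Fin n) (Fin K) ℝ :=
  Matrix.of fun i k => thetaTildeK g θ P δ d k i / normE (thetaTildeK g θ P δ d k)

/-! Conjugating by the invertible diagonal `𝒟_δ^{-1/2}` does not change the rank, and
`Ω = M P Mᵀ` with `M = Θ Z`. Since every community is nonempty and `θ > 0`, the Gram matrix `Mᵀ M`
is an invertible diagonal matrix, so `Mᵀ Ω M = (Mᵀ M) P (Mᵀ M)` is invertible and `Ω` has rank at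
least `K`; it has rank at most `K` because it factors through `ℝ^K`. -/

theorem _root_.Matrix.rank_diagonal_mul_mul_diagonal {m R : Type*} [Fintype m] [DecidableEq m]
    [Field R] (v : m → R) (hv : ∀ i, v i ≠ 0) (A : Matrix m m R) :
    (diagonal v * A * diagonal v).rank = A.rank := by
  have hdet : IsUnit (diagonal v).det := by
    rw [det_diagonal]
    exact (Finset.prod_ne_zero_iff.mpr fun i _ => hv i).isUnit
  rw [rank_mul_eq_left_of_isUnit_det _ _ hdet, rank_mul_eq_right_of_isUnit_det _ _ hdet]

theorem _root_.Matrix.rank_mul_mul_transpose_of_isUnit {m k R : Type*} [Fintype m] [Fintype k]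
    [DecidableEq k] [Field R] (M : Matrix m k R) (P : Matrix k k R) (hM : IsUnit (Mᵀ * M))
    (hP : IsUnit P) : (M * P * Mᵀ).rank = Fintype.card k := by
  refine le_antisymm ((rank_mul_le_right _ _).trans (rank_le_card_height _)) ?_
  have hsandwich : Mᵀ * (M * P * Mᵀ) * M = (Mᵀ * M) * P * (Mᵀ * M) := by
    simp only [Matrix.mul_assoc]
  calc Fintype.card k = (Mᵀ * (M * P * Mᵀ) * M).rank := by
        rw [hsandwich, rank_of_isUnit _ ((hM.mul hP).mul hM)]
    _ ≤ (Mᵀ * (M * P * Mᵀ)).rank := rank_mul_le_left _ _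
    _ ≤ (M * P * Mᵀ).rank := rank_mul_le_right _ _

lemma omega_eq (g : Fin n → Fin K) (θ : Fin n → ℝ) (P : Matrix (Fin K) (Fin K) ℝ) :
    Omega g θ P = (diagonal θ * Zmat g) * P * (diagonal θ * Zmat g)ᵀ := by
  simp only [Omega, transpose_mul, diagonal_transpose, Matrix.mul_assoc]

lemma omega_apply (g : Fin n → Fin K) (θ : Fin n → ℝ) (P : Matrix (Fin K) (Fin K) ℝ)
    (i j : Fin n) : Omega g θ P i j = θ i * P (g i) (g j) * θ j := by
  have hZ : (Zmat g * P * (Zmat g)ᵀ) i j = P (g i) (g j) := by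
    simp [mul_apply, Zmat, ite_mul, mul_ite]
  rw [Omega, Matrix.mul_assoc (diagonal θ * Zmat g), Matrix.mul_assoc (diagonal θ),
    ← Matrix.mul_assoc (Zmat g), mul_diagonal, diagonal_mul, hZ]

lemma dvec_nonneg (g : Fin n → Fin K) {θ : Fin n → ℝ} (hθ : ∀ i, 0 ≤ θ i)
    {P : Matrix (Fin K) (Fin K) ℝ} (hP : ∀ k l, 0 ≤ P k l) (i : Fin n) : 0 ≤ Dvec g θ P i :=
  Finset.sum_nonneg fun j _ => by
    rw [omega_apply]
    exact mul_nonneg (mul_nonneg (hθ i) (hP _ _)) (hθ j)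

lemma diagonal_mul_zmat_apply (g : Fin n → Fin K) (θ : Fin n → ℝ) (i : Fin n) (k : Fin K) :
    (diagonal θ * Zmat g) i k = if g i = k then θ i else 0 := by
  simp [diagonal_mul, Zmat]

lemma transpose_mul_self_diagonal_mul_zmat (g : Fin n → Fin K) (θ : Fin n → ℝ) :
    (diagonal θ * Zmat g)ᵀ * (diagonal θ * Zmat g) =
      diagonal fun k => ∑ i, if g i = k then θ i ^ 2 else 0 := by
  ext k l
  rw [mul_apply, diagonal_apply]
  simp only [transpose_apply, diagonal_mul_zmat_apply]
  split_ifs with hkl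
  · subst hkl
    exact Finset.sum_congr rfl fun i _ => by split_ifs <;> ring
  · exact Finset.sum_eq_zero fun i _ => by split_ifs <;> grind

lemma isUnit_transpose_mul_self_diagonal_mul_zmat {g : Fin n → Fin K}
    (hg : Function.Surjective g) {θ : Fin n → ℝ} (hθ : ∀ i, θ i ≠ 0) :
    IsUnit ((diagonal θ * Zmat g)ᵀ * (diagonal θ * Zmat g)) := by
  rw [transpose_mul_self_diagonal_mul_zmat, isUnit_diagonal, Pi.isUnit_iff]
  intro k
  obtain ⟨i, rfl⟩ := hg k
  refine (Finset.sum_pos' (fun j _ => ?_) ⟨i, Finset.mem_univ i, ?_⟩).ne'.isUnit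
  · split_ifs <;> positivity
  · simpa using sq_pos_of_ne_zero (hθ i)

theorem stmt3_general {n K : ℕ}
    (g : Fin n → Fin K) (hg : Function.Surjective g)
    (θ : Fin n → ℝ) (hθ : ∀ i, 0 < θ i)
    (P : Matrix (Fin K) (Fin K) ℝ) (hPdet : P.det ≠ 0)
    (hPnn : ∀ k l, 0 ≤ P k l)
    (δ d : ℝ) (hδ : 0 < δ) (hd : 0 < d) :
    (Ldelta g θ P δ d).rank = K := by
  have hscale (i : Fin n) : (Real.sqrt (Dvec g θ P i + δ * d))⁻¹ ≠ 0 := by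
    have := dvec_nonneg g (fun i => (hθ i).le) hPnn i
    positivity
  rw [Ldelta, rank_diagonal_mul_mul_diagonal _ hscale, omega_eq,
    rank_mul_mul_transpose_of_isUnit _ _
      (isUnit_transpose_mul_self_diagonal_mul_zmat hg fun i => (hθ i).ne')
      ((isUnit_iff_isUnit_det P).mpr hPdet.isUnit), Fintype.card_fin]

/-- The regularized population Laplacian `𝓛_δ` has rank exactly `K`. -/
theorem stmt3 {n K : ℕ} (hK : 1 ≤ K) (hKn : K ≤ n)
    (g : Fin n → Fin K) (hg : Function.Surjective g)
    (θ : Fin n → ℝ) (hθ : ∀ i, 0 < θ i)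
    (P : Matrix (Fin K) (Fin K) ℝ) (hPsymm : P.IsSymm) (hPdet : P.det ≠ 0)
    (hPnn : ∀ k l, 0 ≤ P k l)
    (δ d : ℝ) (hδ : 0 < δ) (hd : 0 < d) :
    (Ldelta g θ P δ d).rank = K :=
  stmt3_general g hg θ hθ P hPdet hPnn δ d hδ hd

end DCSBM
end
end

section
/- Under the DCSBM population setup, if a ∈ ℝ^K is a unit-norm eigenvector of D̃P̃D̃ with eigenvalue μ, then the vector η = Γ̃a = Σ_{k=1}^K (a(k)/‖θ̃^{(k)}‖)·θ̃^{(k)} ∈ ℝ^n has unit norm and is an eigenvector of 𝓛_δ with eigenvalue ‖θ̃‖²μ, i.e., 𝓛_δ η = ‖θ̃‖²μ · η and ‖η‖ = 1. -/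
open Matrix BigOperators MeasureTheory ProbabilityTheory

noncomputable section

namespace Matrix

variable {R : Type*} [CommSemiring R] {m ι : Type*} [Fintype m] [Fintype ι] [DecidableEq ι]

theorem dotProduct_mulVec_self_of_transpose_mul_self {Γ : Matrix m ι R} (hΓ : Γᵀ * Γ = 1)
    (a : ι → R) : Γ *ᵥ a ⬝ᵥ Γ *ᵥ a = a ⬝ᵥ a := by
  rw [dotProduct_mulVec, ← mulVec_transpose, mulVec_mulVec, hΓ, one_mulVec, dotProduct_comm]

theorem mulVec_mulVec_eq_smul_of_eq_smul_conj {L : Matrix m m R} {Γ : Matrix m ι R}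
    {M : Matrix ι ι R} {c μ : R} {a : ι → R} (hL : L = c • (Γ * M * Γᵀ)) (hΓ : Γᵀ * Γ = 1)
    (ha : M *ᵥ a = μ • a) : L *ᵥ (Γ *ᵥ a) = (c * μ) • (Γ *ᵥ a) := by
  rw [hL, smul_mulVec, mulVec_mulVec, Matrix.mul_assoc, Matrix.mul_assoc, hΓ, Matrix.mul_one,
    ← mulVec_mulVec, ha, mulVec_smul, smul_smul]

end Matrix

namespace DCSBM

theorem normE_eq_sqrt_dotProduct {m : ℕ} (v : Fin m → ℝ) : normE v = Real.sqrt (v ⬝ᵥ v) := by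
  simp only [normE, dotProduct, sq]

theorem normE_pos_of_apply_ne_zero {m : ℕ} {v : Fin m → ℝ} {i : Fin m} (hv : v i ≠ 0) :
    0 < normE v :=
  Real.sqrt_pos.mpr <|
    Finset.sum_pos' (fun j _ => sq_nonneg (v j)) ⟨i, Finset.mem_univ i, by positivity⟩

variable {n K : ℕ} {g : Fin n → Fin K} {θ : Fin n → ℝ} {P : Matrix (Fin K) (Fin K) ℝ} {δ d : ℝ}

theorem Zmat_mul_apply {ι : Type*} (g : Fin n → Fin K) (M : Matrix (Fin K) ι ℝ) (i : Fin n)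
    (l : ι) : (Zmat g * M) i l = M (g i) l := by
  simp [Zmat, mul_apply]

theorem mul_Zmat_transpose_apply {ι : Type*} (g : Fin n → Fin K) (M : Matrix ι (Fin K) ℝ)
    (k : ι) (j : Fin n) : (M * (Zmat g)ᵀ) k j = M k (g j) := by
  simp [Zmat, mul_apply]

theorem Zmat_transpose_mul_diagonal_mul_Zmat (g : Fin n → Fin K) (v : Fin n → ℝ) :
    (Zmat g)ᵀ * diagonal v * Zmat g = diagonal fun k => ∑ i with g i = k, v i := by
  ext k l
  simp only [mul_apply, diagonal_apply, transpose_apply, Zmat, of_apply, Finset.sum_filter]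
  split_ifs with h
  · subst h
    exact Finset.sum_congr rfl fun i _ => by by_cases hk : g i = k <;> simp [hk]
  · refine Finset.sum_eq_zero fun i _ => ?_
    by_cases hk : g i = k <;> simp [hk, h]

theorem Omega_apply (g : Fin n → Fin K) (θ : Fin n → ℝ) (P : Matrix (Fin K) (Fin K) ℝ)
    (i j : Fin n) : Omega g θ P i j = θ i * θ j * P (g i) (g j) := by
  rw [Omega, mul_diagonal, mul_Zmat_transpose_apply, Matrix.mul_assoc, diagonal_mul,
    Zmat_mul_apply]
  ring

theorem DPvec_eq (g : Fin n → Fin K) (θ : Fin n → ℝ) (P : Matrix (Fin K) (Fin K) ℝ)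
    (k : Fin K) : DPvec g θ P k = ∑ j, P k (g j) * θ j := by
  simp only [DPvec, mul_diagonal, mul_Zmat_transpose_apply]

theorem Dvec_eq (g : Fin n → Fin K) (θ : Fin n → ℝ) (P : Matrix (Fin K) (Fin K) ℝ)
    (i : Fin n) : Dvec g θ P i = θ i * DPvec g θ P (g i) := by
  simp only [Dvec, Omega_apply, DPvec_eq, Finset.mul_sum]
  exact Finset.sum_congr rfl fun j _ => by ring

/-- A nonsingular `P` has no zero row, and every community is nonempty. -/
theorem DPvec_pos (hg : Function.Surjective g) (hθ : ∀ i, 0 < θ i) (hPdet : P.det ≠ 0)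
    (hPnn : ∀ k l, 0 ≤ P k l) (k : Fin K) : 0 < DPvec g θ P k := by
  obtain ⟨l, hl⟩ : ∃ l, P k l ≠ 0 := by
    by_contra! h
    exact hPdet (det_eq_zero_of_row_eq_zero k h)
  obtain ⟨j, rfl⟩ := hg l
  rw [DPvec_eq]
  exact Finset.sum_pos' (fun i _ => mul_nonneg (hPnn _ _) (hθ i).le)
    ⟨j, Finset.mem_univ j, mul_pos ((hPnn k _).lt_of_ne' hl) (hθ j)⟩

theorem thetaTilde_eq (hθ : ∀ i, 0 < θ i) (hDP : ∀ k, 0 < DPvec g θ P k) (i : Fin n) :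
    thetaTilde g θ P δ d i =
      θ i * Real.sqrt (DPvec g θ P (g i)) / Real.sqrt (Dvec g θ P i + δ * d) := by
  rw [thetaTilde, thetaDelta, Dvec_eq, ← mul_assoc, ← sq, ← Dvec_eq,
    Real.sqrt_div (by have := hDP (g i); positivity), Real.sqrt_mul (sq_nonneg _),
    Real.sqrt_sq (hθ i).le]

theorem thetaTilde_pos (hθ : ∀ i, 0 < θ i) (hDP : ∀ k, 0 < DPvec g θ P k) (hδd : 0 ≤ δ * d)
    (i : Fin n) : 0 < thetaTilde g θ P δ d i := by
  have hD : 0 < Dvec g θ P i + δ * d := by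
    rw [Dvec_eq]
    linarith [mul_pos (hθ i) (hDP (g i))]
  rw [thetaTilde_eq hθ hDP]
  exact div_pos (mul_pos (hθ i) (Real.sqrt_pos.mpr (hDP (g i)))) (Real.sqrt_pos.mpr hD)

theorem thetaTilde_mul_inv_sqrt_DPvec (hθ : ∀ i, 0 < θ i) (hDP : ∀ k, 0 < DPvec g θ P k)
    (i : Fin n) : thetaTilde g θ P δ d i * (Real.sqrt (DPvec g θ P (g i)))⁻¹ =
      θ i * (Real.sqrt (Dvec g θ P i + δ * d))⁻¹ := by
  have := (Real.sqrt_pos.mpr (hDP (g i))).ne'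
  rw [thetaTilde_eq hθ hDP]
  field_simp

theorem Ldelta_eq (hθ : ∀ i, 0 < θ i) (hDP : ∀ k, 0 < DPvec g θ P k) :
    Ldelta g θ P δ d = Omega g (thetaTilde g θ P δ d) (Ptilde g θ P) := by
  ext i j
  simp only [Ldelta, Ptilde, mul_diagonal, diagonal_mul, Omega_apply]
  calc (Real.sqrt (Dvec g θ P i + δ * d))⁻¹ * (θ i * θ j * P (g i) (g j)) *
        (Real.sqrt (Dvec g θ P j + δ * d))⁻¹
      = θ i * (Real.sqrt (Dvec g θ P i + δ * d))⁻¹ *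
          (θ j * (Real.sqrt (Dvec g θ P j + δ * d))⁻¹) * P (g i) (g j) := by ring
    _ = _ := by
      rw [← thetaTilde_mul_inv_sqrt_DPvec hθ hDP, ← thetaTilde_mul_inv_sqrt_DPvec hθ hDP]
      ring

theorem Gamma_eq (g : Fin n → Fin K) (θ : Fin n → ℝ) (P : Matrix (Fin K) (Fin K) ℝ) (δ d : ℝ) :
    Gamma g θ P δ d = diagonal (thetaTilde g θ P δ d) * Zmat g *
      diagonal fun k => (normE (thetaTildeK g θ P δ d k))⁻¹ := by
  ext i k
  by_cases h : g i = k <;> simp [Gamma, thetaTildeK, Zmat, h, div_eq_mul_inv]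

theorem normE_thetaTildeK_sq (g : Fin n → Fin K) (θ : Fin n → ℝ) (P : Matrix (Fin K) (Fin K) ℝ)
    (δ d : ℝ) (k : Fin K) :
    normE (thetaTildeK g θ P δ d k) ^ 2 = ∑ i with g i = k, thetaTilde g θ P δ d i ^ 2 := by
  rw [normE, Real.sq_sqrt (by positivity), Finset.sum_filter]
  simp [thetaTildeK, ite_pow]

theorem Gamma_transpose_mul_self (hN : ∀ k, normE (thetaTildeK g θ P δ d k) ≠ 0) :
    (Gamma g θ P δ d)ᵀ * Gamma g θ P δ d = 1 := by
  set N := fun k => normE (thetaTildeK g θ P δ d k)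
  have hgram : (Zmat g)ᵀ * diagonal (thetaTilde g θ P δ d) *
      (diagonal (thetaTilde g θ P δ d) * Zmat g) = diagonal fun k => N k ^ 2 := by
    rw [← Matrix.mul_assoc, Matrix.mul_assoc _ _ (diagonal _), diagonal_mul_diagonal,
      Zmat_transpose_mul_diagonal_mul_Zmat]
    congr 1
    funext k
    rw [normE_thetaTildeK_sq]
    simp only [sq]
  rw [Gamma_eq, transpose_mul, transpose_mul, diagonal_transpose, diagonal_transpose]
  calc diagonal (fun k => (N k)⁻¹) * ((Zmat g)ᵀ * diagonal (thetaTilde g θ P δ d)) *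
        (diagonal (thetaTilde g θ P δ d) * Zmat g * diagonal fun k => (N k)⁻¹)
      = diagonal (fun k => (N k)⁻¹) * (diagonal fun k => N k ^ 2) *
          diagonal fun k => (N k)⁻¹ := by
        rw [← hgram]
        simp only [Matrix.mul_assoc]
    _ = 1 := by
        rw [diagonal_mul_diagonal, diagonal_mul_diagonal, ← diagonal_one]
        congr 1
        funext k
        field_simp [show N k ≠ 0 from hN k]

theorem diagonal_thetaTilde_mul_Zmat (hN : ∀ k, normE (thetaTildeK g θ P δ d k) ≠ 0)
    (hT : normE (thetaTilde g θ P δ d) ≠ 0) :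
    diagonal (thetaTilde g θ P δ d) * Zmat g =
      normE (thetaTilde g θ P δ d) • (Gamma g θ P δ d * Dtilde g θ P δ d) := by
  have hscale : normE (thetaTilde g θ P δ d) • diagonal (fun k =>
      (normE (thetaTildeK g θ P δ d k))⁻¹ *
        (normE (thetaTildeK g θ P δ d k) / normE (thetaTilde g θ P δ d))) = 1 := by
    rw [← diagonal_one, ← diagonal_smul]
    congr 1
    funext k
    rw [Pi.smul_apply, smul_eq_mul]
    field_simp [hN k]
  rw [Gamma_eq, Dtilde, Matrix.mul_assoc _ (diagonal _), diagonal_mul_diagonal,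
    ← Matrix.mul_smul, hscale, Matrix.mul_one]

theorem Ldelta_eq_smul_conj (hθ : ∀ i, 0 < θ i) (hDP : ∀ k, 0 < DPvec g θ P k)
    (hN : ∀ k, normE (thetaTildeK g θ P δ d k) ≠ 0) (hT : normE (thetaTilde g θ P δ d) ≠ 0) :
    Ldelta g θ P δ d = normE (thetaTilde g θ P δ d) ^ 2 •
      (Gamma g θ P δ d * (Dtilde g θ P δ d * Ptilde g θ P * Dtilde g θ P δ d) *
        (Gamma g θ P δ d)ᵀ) := by
  have hfactor : Ldelta g θ P δ d = diagonal (thetaTilde g θ P δ d) * Zmat g * Ptilde g θ P *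
      (diagonal (thetaTilde g θ P δ d) * Zmat g)ᵀ := by
    rw [Ldelta_eq hθ hDP, Omega, transpose_mul, diagonal_transpose,
      Matrix.mul_assoc _ _ (diagonal _)]
  rw [hfactor, diagonal_thetaTilde_mul_Zmat hN hT, transpose_smul, transpose_mul, Dtilde,
    diagonal_transpose]
  simp only [Matrix.smul_mul, Matrix.mul_smul, smul_smul, sq, Matrix.mul_assoc]

theorem Gamma_mulVec (g : Fin n → Fin K) (θ : Fin n → ℝ) (P : Matrix (Fin K) (Fin K) ℝ)
    (δ d : ℝ) (a : Fin K → ℝ) :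
    Gamma g θ P δ d *ᵥ a =
      ∑ k, (a k / normE (thetaTildeK g θ P δ d k)) • thetaTildeK g θ P δ d k := by
  ext i
  simp only [mulVec, dotProduct, Gamma, of_apply, Finset.sum_apply, Pi.smul_apply, smul_eq_mul]
  exact Finset.sum_congr rfl fun k _ => by ring

theorem stmt4_general {n K : ℕ} (hK : 1 ≤ K)
    (g : Fin n → Fin K) (hg : Function.Surjective g)
    (θ : Fin n → ℝ) (hθ : ∀ i, 0 < θ i)
    (P : Matrix (Fin K) (Fin K) ℝ) (hPdet : P.det ≠ 0)
    (hPnn : ∀ k l, 0 ≤ P k l)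
    (δ d : ℝ) (hδ : 0 < δ) (hd : 0 < d)
    (a : Fin K → ℝ) (μ : ℝ) (ha : normE a = 1)
    (heig : (Dtilde g θ P δ d * Ptilde g θ P * Dtilde g θ P δ d) *ᵥ a = μ • a) :
    (Gamma g θ P δ d) *ᵥ a =
        (∑ k, (a k / normE (thetaTildeK g θ P δ d k)) • thetaTildeK g θ P δ d k) ∧
      Ldelta g θ P δ d *ᵥ ((Gamma g θ P δ d) *ᵥ a) =
        ((normE (thetaTilde g θ P δ d)) ^ 2 * μ) • ((Gamma g θ P δ d) *ᵥ a) ∧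
      normE ((Gamma g θ P δ d) *ᵥ a) = 1 := by
  have hDP := DPvec_pos hg hθ hPdet hPnn
  have hpos : ∀ i, 0 < thetaTilde g θ P δ d i := thetaTilde_pos hθ hDP (by positivity)
  have hN : ∀ k, normE (thetaTildeK g θ P δ d k) ≠ 0 := fun k => by
    obtain ⟨i, rfl⟩ := hg k
    refine (normE_pos_of_apply_ne_zero (i := i) ?_).ne'
    simpa [thetaTildeK] using (hpos i).ne'
  have hT : normE (thetaTilde g θ P δ d) ≠ 0 := by
    obtain ⟨i, -⟩ := hg ⟨0, hK⟩
    exact (normE_pos_of_apply_ne_zero (hpos i).ne').ne'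
  have hΓ := Gamma_transpose_mul_self hN
  refine ⟨Gamma_mulVec g θ P δ d a, ?_, ?_⟩
  · exact mulVec_mulVec_eq_smul_of_eq_smul_conj (Ldelta_eq_smul_conj hθ hDP hN hT) hΓ heig
  · rw [normE_eq_sqrt_dotProduct, dotProduct_mulVec_self_of_transpose_mul_self hΓ,
      ← normE_eq_sqrt_dotProduct, ha]

/-- If `a` is a unit-norm eigenvector of `D̃P̃D̃` with eigenvalue `μ`, then
`η = Γ̃ a = ∑_k (a k / ‖θ̃^{(k)}‖) • θ̃^{(k)}` is a unit-norm eigenvector of `𝓛_δ`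
with eigenvalue `‖θ̃‖² μ`. -/
theorem stmt4 {n K : ℕ} (hK : 1 ≤ K) (hKn : K ≤ n)
    (g : Fin n → Fin K) (hg : Function.Surjective g)
    (θ : Fin n → ℝ) (hθ : ∀ i, 0 < θ i)
    (P : Matrix (Fin K) (Fin K) ℝ) (hPsymm : P.IsSymm) (hPdet : P.det ≠ 0)
    (hPnn : ∀ k l, 0 ≤ P k l)
    (δ d : ℝ) (hδ : 0 < δ) (hd : 0 < d)
    (a : Fin K → ℝ) (μ : ℝ) (ha : normE a = 1)
    (heig : (Dtilde g θ P δ d * Ptilde g θ P * Dtilde g θ P δ d) *ᵥ a = μ • a) :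
    (Gamma g θ P δ d) *ᵥ a =
        (∑ k, (a k / normE (thetaTildeK g θ P δ d k)) • thetaTildeK g θ P δ d k) ∧
      Ldelta g θ P δ d *ᵥ ((Gamma g θ P δ d) *ᵥ a) =
        ((normE (thetaTilde g θ P δ d)) ^ 2 * μ) • ((Gamma g θ P δ d) *ᵥ a) ∧
      normE ((Gamma g θ P δ d) *ᵥ a) = 1 :=
  stmt4_general hK g hg θ hθ P hPdet hPnn δ d hδ hd a μ ha heig

end DCSBM
end
end
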